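/- arXiv:2201.01023 — 4 statements merged into one kernel-verified Lean document; each statement's English description precedes it below -/
import Mathlib

section
/- Let (R,m,k) be a commutative Noetherian local ring and let M and N be finitely generated R-modules with N faithful (i.e., the annihilator of N in R is zero). If t ≥ 1 is an integer such that Ext^t_R(M, mN) = 0, then the projective dimension of M is strictly less than t. -/
open CategoryTheory

universe u

/-- The colon submodule `(N :_X I) = {x ∈ X : I • x ⊆ N}`. -/
def Submodule.colonBy {R X : Type u} [CommRing R] [AddCommGroup X] [Module R X]
    (N : Submodule R X) (I : Ideal R) : Submodule R X where
  carrier := {x | ∀ r ∈ I, r • x ∈ N}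
  add_mem' := by
    intro a b ha hb r hr
    rw [smul_add]
    exact N.add_mem (ha r hr) (hb r hr)
  zero_mem' := by
    intro r hr
    rw [smul_zero]
    exact N.zero_mem
  smul_mem' := by
    intro c x hx r hr
    rw [smul_comm]
    exact N.smul_mem c (hx r hr)

/-- A submodule `N` of a module `X` over a local ring `(R, 𝔪)` is *Burch* if
`𝔪 • (N :_X 𝔪) ≠ 𝔪 • N`. -/
def Submodule.IsBurch {R X : Type u} [CommRing R] [IsLocalRing R] [AddCommGroup X]
    [Module R X] (N : Submodule R X) : Prop :=
  IsLocalRing.maximalIdeal R • N.colonBy (IsLocalRing.maximalIdeal R) ≠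
    IsLocalRing.maximalIdeal R • N

/-- `Tor_n^R(M, N) = 0`. -/
def TorIsZero (R : Type u) [CommRing R] (M N : Type u) [AddCommGroup M] [Module R M]
    [AddCommGroup N] [Module R N] (n : ℕ) : Prop :=
  Subsingleton (((Tor (ModuleCat.{u} R) n).obj (ModuleCat.of R M)).obj (ModuleCat.of R N))

/-- `Ext^n_R(M, N) = 0`. -/
def ExtIsZero (R : Type u) [CommRing R] (M N : Type u) [AddCommGroup M] [Module R M]
    [AddCommGroup N] [Module R N] (n : ℕ) : Prop :=
  Subsingleton
    (((Ext R (ModuleCat.{u} R) n).obj (Opposite.op (ModuleCat.of R M))).obj (ModuleCat.of R N))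

/-- `M` has projective dimension strictly less than `t`, i.e. `M` admits a projective
resolution vanishing in all degrees `≥ t`. -/
def HasProjDimLT (R : Type u) [CommRing R] (M : Type u) [AddCommGroup M] [Module R M]
    (t : ℕ) : Prop :=
  ∃ P : ProjectiveResolution (ModuleCat.of R M), ∀ i, t ≤ i → Limits.IsZero (P.complex.X i)

/-- `M` has injective dimension strictly less than `t`, i.e. `M` admits an injective
resolution vanishing in all degrees `≥ t`. -/
def HasInjDimLT (R : Type u) [CommRing R] (M : Type u) [AddCommGroup M] [Module R M]
    (t : ℕ) : Prop :=
  ∃ I : InjectiveResolution (ModuleCat.of R M), ∀ i, t ≤ i → Limits.IsZero (I.cocomplex.X i)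

/-- The depth of a module `M` over a local ring `(R, 𝔪, k)`: the smallest `i` such that
`Ext^i_R(k, M) ≠ 0` (and `⊤` if no such `i` exists). -/
noncomputable def moduleDepth (R : Type u) [CommRing R] [IsLocalRing R] (M : Type u)
    [AddCommGroup M] [Module R M] : ℕ∞ :=
  sInf {n : ℕ∞ | ∃ i : ℕ, n = (i : ℕ∞) ∧ ¬ ExtIsZero R (IsLocalRing.ResidueField R) M i}

/-!
Take the minimal free resolution `F` of `M`: its `t`-th syzygy `K ⊆ F_{t-1}` lies in `𝔪 F_{t-1}`,
and `Ext^t(M, 𝔪N) = 0` says that every map `K → 𝔪N` extends to `F_{t-1}`. Each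
`θ : F_{t-1} → N` sends `K` into `𝔪N`, so subtracting an extension of `θ|_K` writes `θ` as a map
vanishing on `K` plus an element of `𝔪 Hom(F_{t-1}, N)`. By Nakayama every `θ` vanishes on `K`;
taking `θ = (coordinate) • y` shows that the coordinates of elements of `K` annihilate `N`, so
`K = 0` by faithfulness.
-/

open Submodule IsLocalRing Opposite Limits
open scoped TensorProduct

section FreeModule

variable {R : Type*} [CommRing R] {F N : Type*} [AddCommGroup F] [Module R F]
  [AddCommGroup N] [Module R N] {ι : Type*}

theorem Submodule.mem_ideal_smul_top_of_forall_mem [Fintype ι] [DecidableEq ι] {I : Ideal R}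
    {z : ι → R} (hz : ∀ i, z i ∈ I) : z ∈ I • (⊤ : Submodule R (ι → R)) := by
  rw [pi_eq_sum_univ z]
  exact sum_mem fun i _ => smul_mem_smul (hz i) trivial

theorem LinearMap.mem_ideal_smul_top_of_range_le [Fintype ι] (b : Module.Basis ι R F)
    {I : Ideal R} {ψ : F →ₗ[R] N} (hψ : LinearMap.range ψ ≤ I • ⊤) :
    ψ ∈ I • (⊤ : Submodule R (F →ₗ[R] N)) := by
  have hsum : ψ = ∑ i, (b.coord i).smulRight (ψ (b i)) := b.ext fun j => by
    classical
    simp [LinearMap.sum_apply, Finsupp.single_apply]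
  rw [hsum]
  exact sum_mem fun i _ =>
    smul_top_le_comap_smul_top I (LinearMap.smulRightₗ (b.coord i)) (hψ ⟨b i, rfl⟩)

theorem Submodule.eq_bot_of_forall_linearMap_eq_zero (b : Module.Basis ι R F)
    (hN : Module.annihilator R N = ⊥) {K : Submodule R F}
    (hK : ∀ θ : F →ₗ[R] N, ∀ z ∈ K, θ z = 0) : K = ⊥ := by
  refine (Submodule.eq_bot_iff K).2 fun z hz => b.ext_elem fun i => ?_
  have : b.coord i z ∈ Module.annihilator R N :=
    Module.mem_annihilator.2 fun y => by simpa using hK ((b.coord i).smulRight y) z hz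
  simpa [hN] using this

end FreeModule

namespace ModuleCat

variable {R : Type u} [Ring R] {X : Type u} [AddCommGroup X] [Module R X]
  {F : ℕ → Type u} [∀ i, AddCommGroup (F i)] [∀ i, Module R (F i)]
  [∀ i, Module.Projective R (F i)] (d : ∀ i, F (i + 1) →ₗ[R] F i) (ε : F 0 →ₗ[R] X)

noncomputable def projectiveResolutionOfExact (hε : Function.Surjective ε)
    (h₀ : LinearMap.range (d 0) = LinearMap.ker ε)
    (hd : ∀ i, LinearMap.range (d (i + 1)) = LinearMap.ker (d i)) :
    ProjectiveResolution (ModuleCat.of R X) where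
  complex := ChainComplex.of (fun i => ModuleCat.of R (F i)) (fun i => ofHom (d i))
    fun i => hom_ext <| LinearMap.range_le_ker_iff.1 (hd i).le
  projective i := inferInstanceAs (Projective (ModuleCat.of R (F i)))
  π := (ChainComplex.toSingle₀Equiv _ _).symm
    ⟨ofHom ε, (congrArg (· ≫ ofHom ε)
      (ChainComplex.of_d (fun i => ModuleCat.of R (F i)) (fun i => ofHom (d i)) 0)).trans
      (hom_ext (LinearMap.range_le_ker_iff.1 h₀.le))⟩
  quasiIso := ⟨fun n => by
    cases n with
    | zero =>
      rw [ChainComplex.quasiIsoAt₀_iff, ShortComplex.quasiIso_iff_of_zeros' _ rfl rfl rfl]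
      refine ⟨?_, (epi_iff_surjective _).2 hε⟩
      rw [ShortComplex.moduleCat_exact_iff_range_eq_ker]
      exact h₀
    | succ n =>
      rw [quasiIsoAt_iff_exactAt' _ _ (ChainComplex.exactAt_succ_single_obj _ _),
        HomologicalComplex.exactAt_iff' _ (n + 1 + 1) (n + 1) n (by simp) (by simp),
        ShortComplex.moduleCat_exact_iff_range_eq_ker]
      dsimp only [ChainComplex.of, HomologicalComplex.sc', HomologicalComplex.shortComplexFunctor']
      simp only [ChainComplex.of_d, hom_ofHom]
      exact hd n⟩

variable (hε : Function.Surjective ε) (h₀ : LinearMap.range (d 0) = LinearMap.ker ε)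
  (hd : ∀ i, LinearMap.range (d (i + 1)) = LinearMap.ker (d i))

theorem projectiveResolutionOfExact_complex_d (i : ℕ) :
    (projectiveResolutionOfExact d ε hε h₀ hd).complex.d (i + 1) i = ofHom (d i) :=
  ChainComplex.of_d (fun i => ModuleCat.of R (F i)) (fun i => ofHom (d i)) i

theorem isZero_projectiveResolutionOfExact_complex_X {i : ℕ} [Subsingleton (F i)] :
    IsZero ((projectiveResolutionOfExact d ε hε h₀ hd).complex.X i) :=
  isZero_of_subsingleton (ModuleCat.of R (F i))

end ModuleCat

theorem CategoryTheory.ProjectiveResolution.exists_d_comp_eq_of_isZero_ext {R : Type*} [Ring R]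
    {C : Type*} [Category C] [Abelian C] [Linear R C] [EnoughProjectives C] {X Y : C}
    (P : ProjectiveResolution X) {n : ℕ} (hY : IsZero (((Ext R C (n + 1)).obj (op X)).obj Y))
    (φ : P.complex.X (n + 1) ⟶ Y) (hφ : P.complex.d (n + 2) (n + 1) ≫ φ = 0) :
    ∃ ψ : P.complex.X n ⟶ Y, P.complex.d (n + 1) n ≫ ψ = φ := by
  have hexact := (HomologicalComplex.exactAt_iff_isZero_homology _ _).2
    (hY.of_iso (P.isoExt (n + 1) Y).symm)
  rw [HomologicalComplex.exactAt_iff' _ n (n + 1) (n + 2) (by simp) (by simp),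
    ShortComplex.moduleCat_exact_iff] at hexact
  exact hexact φ hφ

namespace IsLocalRing

variable {R : Type*} [CommRing R] [IsLocalRing R]

theorem eq_bot_of_forall_extends_to_maximalIdeal_smul_top {F N : Type*} [AddCommGroup F]
    [Module R F] [Module.Free R F] [Module.Finite R F] [AddCommGroup N] [Module R N]
    [Module.Finite R N] (hN : Module.annihilator R N = ⊥) {K : Submodule R F}
    (hK : K ≤ maximalIdeal R • ⊤)
    (hext : ∀ φ : K →ₗ[R] (maximalIdeal R • ⊤ : Submodule R N),
      ∃ ψ : F →ₗ[R] (maximalIdeal R • ⊤ : Submodule R N), ψ ∘ₗ K.subtype = φ) : K = ⊥ := by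
  set mN : Submodule R N := maximalIdeal R • ⊤
  let b := Module.Free.chooseBasis R F
  let Z := LinearMap.ker (LinearMap.lcomp R N K.subtype)
  have hsup : ⊤ ≤ Z ⊔ maximalIdeal R • ⊤ := by
    intro θ _
    have hθK : ∀ z ∈ K, θ z ∈ mN := fun z hz =>
      smul_top_le_comap_smul_top (maximalIdeal R) θ (hK hz)
    obtain ⟨ψ, hψ⟩ := hext (θ.restrict hθK)
    have hψm : mN.subtype ∘ₗ ψ ∈ maximalIdeal R • (⊤ : Submodule R (F →ₗ[R] N)) :=
      LinearMap.mem_ideal_smul_top_of_range_le b (by rintro _ ⟨x, rfl⟩; exact (ψ x).2)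
    have hZ : θ - mN.subtype ∘ₗ ψ ∈ Z := LinearMap.ext fun z =>
      sub_eq_zero.2 (congrArg Subtype.val (LinearMap.congr_fun hψ z)).symm
    simpa using add_mem_sup hZ hψm
  have hZ : Z = ⊤ := top_le_iff.1 <| le_of_le_smul_of_le_jacobson_bot
    Module.Finite.fg_top (jacobson_eq_maximalIdeal ⊥ bot_ne_top).ge hsup
  refine eq_bot_of_forall_linearMap_eq_zero b hN fun θ z hz => ?_
  simpa using LinearMap.congr_fun (show θ ∈ Z from hZ ▸ trivial) ⟨z, hz⟩

theorem exists_surjective_ker_le_maximalIdeal_smul_top (X : Type*) [AddCommGroup X]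
    [Module R X] [Module.Finite R X] :
    ∃ (n : ℕ) (f : (Fin n → R) →ₗ[R] X),
      Function.Surjective f ∧ LinearMap.ker f ≤ maximalIdeal R • ⊤ := by
  let b := Module.finBasis (ResidueField R) (ResidueField R ⊗[R] X)
  choose v hv using fun i =>
    TensorProduct.mk_surjective R X (ResidueField R) residue_surjective (b i)
  refine ⟨_, Fintype.linearCombination R v, ?_, fun z hz => ?_⟩
  · rw [← LinearMap.range_eq_top, Fintype.range_linearCombination]
    exact span_eq_top_of_tmul_eq_basis v b hv
  · have hb : ∑ i, residue R (z i) • b i = 0 := by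
      have := congrArg (TensorProduct.mk R (ResidueField R) X 1) hz
      simpa [Fintype.linearCombination_apply, ← hv, ← ResidueField.algebraMap_eq,
        algebraMap_smul] using this
    refine mem_ideal_smul_top_of_forall_mem fun i => ?_
    exact (residue_eq_zero_iff _).1 (Fintype.linearIndependent_iff.1 b.linearIndependent _ hb i)

theorem subsingleton_of_ker_le_maximalIdeal_smul_top {F X : Type*} [AddCommGroup F] [Module R F]
    [Module.Finite R F] [AddCommGroup X] [Module R X] [Subsingleton X] (f : F →ₗ[R] X)
    (hf : LinearMap.ker f ≤ maximalIdeal R • ⊤) : Subsingleton F := by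
  have htop : (⊤ : Submodule R F) ≤ maximalIdeal R • ⊤ :=
    (LinearMap.ker_eq_top.2 (Subsingleton.elim _ _)).ge.trans hf
  refine (Submodule.subsingleton_iff R).1 (subsingleton_iff_bot_eq_top.1 ?_)
  exact (eq_bot_of_le_smul_of_le_jacobson_bot _ ⊤ Module.Finite.fg_top htop
    (jacobson_eq_maximalIdeal ⊥ bot_ne_top).ge).symm

variable (R)

noncomputable def minimalCoverRank (X : Type*) [AddCommGroup X] [Module R X] [Module.Finite R X] :
    ℕ :=
  (exists_surjective_ker_le_maximalIdeal_smul_top (R := R) X).choose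

noncomputable def minimalCover (X : Type*) [AddCommGroup X] [Module R X] [Module.Finite R X] :
    (Fin (minimalCoverRank R X) → R) →ₗ[R] X :=
  (exists_surjective_ker_le_maximalIdeal_smul_top (R := R) X).choose_spec.choose

variable (X : Type*) [AddCommGroup X] [Module R X] [Module.Finite R X]

theorem minimalCover_surjective : Function.Surjective (minimalCover R X) :=
  (exists_surjective_ker_le_maximalIdeal_smul_top (R := R) X).choose_spec.choose_spec.1

theorem ker_minimalCover_le : LinearMap.ker (minimalCover R X) ≤ maximalIdeal R • ⊤ :=
  (exists_surjective_ker_le_maximalIdeal_smul_top (R := R) X).choose_spec.choose_spec.2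

variable [IsNoetherianRing R] (M : Type*) [AddCommGroup M] [Module R M] [Module.Finite R M]

/-- `minimalSyzygy R M i = ⟨n, K⟩` where `K ⊆ Rⁿ` is the `(i + 1)`-st syzygy of `M` in its
minimal free resolution. -/
noncomputable def minimalSyzygy : ℕ → Σ n : ℕ, Submodule R (Fin n → R)
  | 0 => ⟨minimalCoverRank R M, LinearMap.ker (minimalCover R M)⟩
  | i + 1 => ⟨minimalCoverRank R (minimalSyzygy i).2,
      LinearMap.ker (minimalCover R (minimalSyzygy i).2)⟩

noncomputable def minimalDifferential (i : ℕ) :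
    (Fin (minimalSyzygy R M (i + 1)).1 → R) →ₗ[R] (Fin (minimalSyzygy R M i).1 → R) :=
  (minimalSyzygy R M i).2.subtype ∘ₗ minimalCover R (minimalSyzygy R M i).2

theorem range_minimalDifferential (i : ℕ) :
    LinearMap.range (minimalDifferential R M i) = (minimalSyzygy R M i).2 := by
  ext x
  refine ⟨?_, fun hx => ?_⟩
  · rintro ⟨y, rfl⟩
    exact (minimalCover R _ y).2
  · obtain ⟨y, hy⟩ := minimalCover_surjective R (minimalSyzygy R M i).2 ⟨x, hx⟩
    exact ⟨y, congrArg Subtype.val hy⟩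

theorem ker_minimalDifferential (i : ℕ) :
    LinearMap.ker (minimalDifferential R M i) = (minimalSyzygy R M (i + 1)).2 := by
  ext y
  exact Submodule.coe_eq_zero

theorem minimalSyzygy_le (i : ℕ) : (minimalSyzygy R M i).2 ≤ maximalIdeal R • ⊤ := by
  cases i <;> exact ker_minimalCover_le R _

end IsLocalRing

namespace IsLocalRing

variable (R : Type u) [CommRing R] [IsLocalRing R] [IsNoetherianRing R]
  (M : Type u) [AddCommGroup M] [Module R M] [Module.Finite R M]

noncomputable def minimalFreeResolution : ProjectiveResolution (ModuleCat.of R M) :=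
  ModuleCat.projectiveResolutionOfExact (F := fun i => Fin (minimalSyzygy R M i).1 → R)
    (minimalDifferential R M) (minimalCover R M) (minimalCover_surjective R M)
    (range_minimalDifferential R M 0)
    fun i => (range_minimalDifferential R M (i + 1)).trans (ker_minimalDifferential R M i).symm

theorem minimalFreeResolution_complex_d (i : ℕ) :
    (minimalFreeResolution R M).complex.d (i + 1) i = ModuleCat.ofHom (minimalDifferential R M i) :=
  ModuleCat.projectiveResolutionOfExact_complex_d _ _ _ _ _ i

theorem minimalCover_comp_minimalDifferential (i : ℕ) :
    minimalCover R (minimalSyzygy R M i).2 ∘ₗ minimalDifferential R M (i + 1) = 0 :=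
  LinearMap.range_le_ker_iff.1 (range_minimalDifferential R M (i + 1)).le

theorem minimalSyzygy_eq_bot_of_extIsZero {N : Type u} [AddCommGroup N] [Module R N]
    [Module.Finite R N] (hN : Module.annihilator R N = ⊥) {s : ℕ}
    (h : ExtIsZero R M ↥(maximalIdeal R • (⊤ : Submodule R N)) (s + 1)) :
    (minimalSyzygy R M s).2 = ⊥ := by
  refine eq_bot_of_forall_extends_to_maximalIdeal_smul_top hN (minimalSyzygy_le R M s) fun φ => ?_
  have hcocycle : (minimalFreeResolution R M).complex.d (s + 2) (s + 1) ≫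
      ModuleCat.ofHom (φ ∘ₗ minimalCover R _) = 0 := by
    rw [minimalFreeResolution_complex_d]
    refine ModuleCat.hom_ext (LinearMap.ext fun x => ?_)
    exact (congrArg φ (LinearMap.congr_fun (minimalCover_comp_minimalDifferential R M s) x)).trans
      φ.map_zero
  obtain ⟨ψ, hψ⟩ := (minimalFreeResolution R M).exists_d_comp_eq_of_isZero_ext
    (@ModuleCat.isZero_of_subsingleton _ _ _ h) _ hcocycle
  rw [minimalFreeResolution_complex_d] at hψ
  exact ⟨ψ.hom, (LinearMap.cancel_right (minimalCover_surjective R _)).1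
    (congrArg ModuleCat.Hom.hom hψ)⟩

theorem subsingleton_minimalSyzygy_succ {s : ℕ} (hs : (minimalSyzygy R M s).2 = ⊥) :
    Subsingleton (Fin (minimalSyzygy R M (s + 1)).1 → R) := by
  have := Submodule.subsingleton_iff_eq_bot.2 hs
  exact subsingleton_of_ker_le_maximalIdeal_smul_top
    (F := Fin (minimalCoverRank R (minimalSyzygy R M s).2) → R)
    (minimalCover R (minimalSyzygy R M s).2) (ker_minimalCover_le R _)

theorem minimalSyzygy_add_eq_bot {s : ℕ} (hs : (minimalSyzygy R M s).2 = ⊥) (j : ℕ) :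
    (minimalSyzygy R M (s + j)).2 = ⊥ := by
  induction j with
  | zero => exact hs
  | succ j ih =>
    have := subsingleton_minimalSyzygy_succ R M ih
    exact Submodule.eq_bot_of_subsingleton

theorem isZero_minimalFreeResolution_X {s i : ℕ} (hs : (minimalSyzygy R M s).2 = ⊥)
    (hi : s < i) : IsZero ((minimalFreeResolution R M).complex.X i) := by
  obtain ⟨j, rfl⟩ := Nat.exists_eq_add_of_lt hi
  have := subsingleton_minimalSyzygy_succ R M (minimalSyzygy_add_eq_bot R M hs j)
  exact ModuleCat.isZero_projectiveResolutionOfExact_complex_X _ _ _ _ _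

end IsLocalRing

/-- Over a Noetherian local ring `(R, 𝔪)`, if `M`, `N` are finitely generated,
`N` is faithful, `t ≥ 1` and `Ext^t_R(M, 𝔪N) = 0`, then `pd_R M < t`. -/
theorem ext_vanishing_mN_faithful
    {R : Type u} [CommRing R] [IsNoetherianRing R] [IsLocalRing R]
    {M : Type u} [AddCommGroup M] [Module R M] [Module.Finite R M]
    {N : Type u} [AddCommGroup N] [Module R N] [Module.Finite R N]
    (hfaith : Module.annihilator R N = ⊥)
    (t : ℕ) (ht : 1 ≤ t)
    (h : ExtIsZero R M (↥(IsLocalRing.maximalIdeal R • (⊤ : Submodule R N))) t) :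
    HasProjDimLT R M t := by
  obtain ⟨s, rfl⟩ := Nat.exists_eq_add_of_le' ht
  have hs := IsLocalRing.minimalSyzygy_eq_bot_of_extIsZero R M hfaith h
  exact ⟨IsLocalRing.minimalFreeResolution R M, fun i hi =>
    IsLocalRing.isZero_minimalFreeResolution_X R M hs hi⟩
end

section
/- Let (R,m,k) be a commutative Noetherian local ring, let X be a finitely generated R-module and let N be a weakly m-full submodule of X, i.e., (mN :_X m) = N. If the quotient X/N has depth zero (equivalently, its socle (N :_X m)/N is nonzero), then N is a Burch submodule of X. In particular, if the zero submodule of a finitely generated R-module M is weakly m-full in M, then depth_R(M) > 0. -/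
open CategoryTheory

universe u

/-- Over a Noetherian local ring `(R, 𝔪)`, a weakly `𝔪`-full submodule `N` of a
finitely generated module `X` (i.e. `(𝔪N :_X 𝔪) = N`) such that `X/N` has depth zero (its socle
is nonzero) is a Burch submodule of `X`. In particular, if the zero submodule of a finitely
generated module `M` is weakly `𝔪`-full in `M`, then `depth_R M > 0` (the socle of `M` is zero). -/
theorem weakly_m_full_is_burch
    {R : Type u} [CommRing R] [IsNoetherianRing R] [IsLocalRing R]
    {X : Type u} [AddCommGroup X] [Module R X] [Module.Finite R X]
    (N : Submodule R X)
    (hwmf : Submodule.colonBy (IsLocalRing.maximalIdeal R • N) (IsLocalRing.maximalIdeal R) = N)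
    (hdepth : ∃ x : X ⧸ N, x ≠ 0 ∧ ∀ r ∈ IsLocalRing.maximalIdeal R, r • x = 0) :
    N.IsBurch ∧
      ∀ (M : Type u) [AddCommGroup M] [Module R M] [Module.Finite R M],
        Submodule.colonBy (IsLocalRing.maximalIdeal R • (⊥ : Submodule R M))
            (IsLocalRing.maximalIdeal R) = (⊥ : Submodule R M) →
          ∀ x : M, (∀ r ∈ IsLocalRing.maximalIdeal R, r • x = 0) → x = 0 := by
  constructor
  · intro heq
    obtain ⟨xb, hx0, hxm⟩ := hdepth
    obtain ⟨x, rfl⟩ := Submodule.Quotient.mk_surjective N xb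
    have hxN : x ∈ N.colonBy (IsLocalRing.maximalIdeal R) := by
      intro r hr
      have := hxm r hr
      rwa [← Submodule.Quotient.mk_smul, Submodule.Quotient.mk_eq_zero] at this
    have hx : x ∈ Submodule.colonBy (IsLocalRing.maximalIdeal R • N)
        (IsLocalRing.maximalIdeal R) := by
      intro r hr
      have : r • x ∈ IsLocalRing.maximalIdeal R • N.colonBy (IsLocalRing.maximalIdeal R) :=
        Submodule.smul_mem_smul hr hxN
      rwa [heq] at this
    rw [hwmf] at hx
    exact hx0 ((Submodule.Quotient.mk_eq_zero N).mpr hx)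
  · intro M _ _ _ h x hx
    have : x ∈ Submodule.colonBy (IsLocalRing.maximalIdeal R • (⊥ : Submodule R M))
        (IsLocalRing.maximalIdeal R) := by
      intro r hr
      simp [hx r hr]
    rw [h] at this
    exact this
end

section
/- Let (R,m,k) be a commutative Noetherian local ring, let X be a finitely generated R-module and let N be a submodule of X. Then N is a Burch submodule of X (i.e., m·(N :_X m) ≠ m·N) if and only if (mN :_X m) ≠ (N :_X m). -/
open CategoryTheory

universe u

/-! Through the adjunction `I • P ≤ N ↔ P ≤ (N :_X I)`, both equalities amount to
`I • (N :_X I) ≤ I • N`; the reverse inclusions hold for every `N`. -/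

namespace Submodule

variable {R X : Type u} [CommRing R] [AddCommGroup X] [Module R X]

theorem smul_le_iff_le_colonBy {I : Ideal R} {N P : Submodule R X} :
    I • P ≤ N ↔ P ≤ N.colonBy I :=
  ⟨fun h _ hx _ hr => h (smul_mem_smul hr hx), fun h => smul_le.mpr fun _ hr _ hx => h hx _ hr⟩

theorem smul_colonBy_le (I : Ideal R) (N : Submodule R X) : I • N.colonBy I ≤ N :=
  smul_le_iff_le_colonBy.mpr le_rfl

theorem le_colonBy (I : Ideal R) (N : Submodule R X) : N ≤ N.colonBy I :=
  smul_le_iff_le_colonBy.mp smul_le_right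

theorem colonBy_mono (I : Ideal R) {N N' : Submodule R X} (h : N ≤ N') :
    N.colonBy I ≤ N'.colonBy I :=
  smul_le_iff_le_colonBy.mp ((smul_colonBy_le I N).trans h)

theorem smul_colonBy_eq_smul_iff (I : Ideal R) (N : Submodule R X) :
    I • N.colonBy I = I • N ↔ (I • N).colonBy I = N.colonBy I := by
  have h_lower : I • N ≤ I • N.colonBy I := smul_mono_right I (le_colonBy I N)
  have h_upper : (I • N).colonBy I ≤ N.colonBy I := colonBy_mono I smul_le_right
  constructor
  · intro h
    exact h_upper.antisymm (smul_le_iff_le_colonBy.mp h.le)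
  · intro h
    refine le_antisymm ?_ h_lower
    calc I • N.colonBy I = I • (I • N).colonBy I := by rw [h]
      _ ≤ I • N := smul_colonBy_le I (I • N)

end Submodule

theorem burch_iff_colon_ne_general
    {R : Type u} [CommRing R] [IsLocalRing R]
    {X : Type u} [AddCommGroup X] [Module R X]
    (N : Submodule R X) :
    N.IsBurch ↔
      Submodule.colonBy (IsLocalRing.maximalIdeal R • N) (IsLocalRing.maximalIdeal R) ≠
        N.colonBy (IsLocalRing.maximalIdeal R) := by
  rw [Submodule.IsBurch, Ne, Ne, Submodule.smul_colonBy_eq_smul_iff]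

/-- Over a Noetherian local ring `(R, 𝔪)`, a submodule `N` of a finitely
generated module `X` is Burch (i.e. `𝔪(N :_X 𝔪) ≠ 𝔪N`) if and only if
`(𝔪N :_X 𝔪) ≠ (N :_X 𝔪)`. -/
theorem burch_iff_colon_ne
    {R : Type u} [CommRing R] [IsNoetherianRing R] [IsLocalRing R]
    {X : Type u} [AddCommGroup X] [Module R X] [Module.Finite R X]
    (N : Submodule R X) :
    N.IsBurch ↔
      Submodule.colonBy (IsLocalRing.maximalIdeal R • N) (IsLocalRing.maximalIdeal R) ≠
        N.colonBy (IsLocalRing.maximalIdeal R) :=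
  burch_iff_colon_ne_general N
end

section
/- Let (R,m,k) be a commutative Noetherian local ring, let X be a finitely generated R-module and let N be a Burch submodule of X. Then there exists an element a ∈ m such that k is a direct summand of N/aN. If moreover depth_R(N) > 0, then a can be chosen to be a non-zero-divisor on N, and furthermore such that aN is a Burch submodule of N. -/
open CategoryTheory

universe u

/-!
Being Burch means that some `a ∈ 𝔪` and `x ∈ (N :_X 𝔪)` have `a x ∉ 𝔪 N`. Then `y = a x ∈ N`
satisfies `𝔪 y ⊆ a N ⊆ 𝔪 N ∌ y`, so `r ↦ r y` embeds `k` into `N / a N`, and this embedding is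
split by any functional `N / 𝔪 N → k` taking the value `1` at `y`.

The admissible `a` are the elements of `𝔪` outside the colon ideal `(𝔪 N :_R (N :_X 𝔪))`. If `𝔪`
contains an `N`-regular element, prime avoidance against this ideal and the finitely many
associated primes of `N` produces an admissible `a` that is `N`-regular. Then `a N` is Burch in
`N`: `y ∈ (a N :_N 𝔪)`, while `a y ∈ 𝔪 (a N) = a (𝔪 N)` would force `y ∈ 𝔪 N` after cancelling `a`.
-/

open IsLocalRing Submodule

theorem exists_isSMulRegular_mem_notMem_of_not_le {R M : Type*} [CommRing R] [IsNoetherianRing R]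
    [AddCommGroup M] [Module R M] [Module.Finite R M] {I J : Ideal R} (hJI : ¬ J ≤ I) {r : R}
    (hr : r ∈ J) (hreg : IsSMulRegular M r) : ∃ a ∈ J, a ∉ I ∧ IsSMulRegular M a := by
  by_contra! h
  have hcover : (J : Set R) ⊆ ⋃ p ∈ insert I (associatedPrimes R M), id p := by
    intro a ha
    by_cases haI : a ∈ I
    · exact Set.mem_biUnion (Set.mem_insert I _) haI
    · have : a ∈ ⋃ p ∈ associatedPrimes R M, (p : Set R) := by
        rw [biUnion_associatedPrimes_eq_compl_regular R M]
        exact h a ha haI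
      obtain ⟨p, hp, hap⟩ := Set.mem_iUnion₂.mp this
      exact Set.mem_biUnion (Set.mem_insert_of_mem I hp) hap
  obtain ⟨p, hp, hJp⟩ := (Ideal.subset_union_prime_finite ((associatedPrimes.finite R M).insert I)
    I I fun p hp hpI _ => (hp.resolve_left hpI).isPrime).mp hcover
  rcases hp with rfl | hp
  · exact hJI hJp
  · have : r ∈ ⋃ p ∈ associatedPrimes R M, (p : Set R) := Set.mem_biUnion hp (hJp hr)
    rw [biUnion_associatedPrimes_eq_compl_regular R M] at this
    exact this hreg

section

variable {R M : Type u} [CommRing R] [AddCommGroup M] [Module R M]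

theorem Submodule.le_colonBy_s15 (N : Submodule R M) (I : Ideal R) : N ≤ N.colonBy I :=
  fun _ hx r _ => N.smul_mem r hx

variable [IsLocalRing R]

theorem Submodule.isBurch_iff_not_le_colon (N : Submodule R M) :
    N.IsBurch ↔ ¬ maximalIdeal R ≤ (maximalIdeal R • N).colon (N.colonBy (maximalIdeal R)) := by
  have hle : maximalIdeal R ≤ (maximalIdeal R • N).colon (N.colonBy (maximalIdeal R)) ↔
      maximalIdeal R • N.colonBy (maximalIdeal R) ≤ maximalIdeal R • N := by
    rw [smul_le]
    exact forall₂_congr fun r _ => mem_colon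
  rw [Submodule.IsBurch, Ne, hle, not_iff_not]
  exact ⟨fun h => h.le, fun h => h.antisymm (smul_mono_right _ (N.le_colonBy_s15 _))⟩

theorem Submodule.exists_mem_colonBy_span_singleton_smul_top (N : Submodule R M) {a : R}
    (ha : a ∈ maximalIdeal R)
    (haN : a ∉ (maximalIdeal R • N).colon (N.colonBy (maximalIdeal R))) :
    ∃ y : N, y ∈ (Ideal.span {a} • ⊤ : Submodule R N).colonBy (maximalIdeal R) ∧
      y ∉ maximalIdeal R • (⊤ : Submodule R N) := by
  obtain ⟨x, hx, hax⟩ := not_forall₂.mp (mt mem_colon.mpr haN)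
  refine ⟨⟨a • x, hx a ha⟩, fun s hs => ?_, (mem_smul_top_iff _ _ _).not.mpr hax⟩
  have hsax : s • (⟨a • x, hx a ha⟩ : N) = a • ⟨s • x, hx s hs⟩ := Subtype.ext (smul_comm s a x)
  rw [hsax]
  exact smul_mem_smul (Ideal.mem_span_singleton_self a) trivial

theorem IsLocalRing.ResidueField.smul_eq_zero_of_mem {r : R} (hr : r ∈ maximalIdeal R)
    (c : ResidueField R) : r • c = 0 := by
  rw [Algebra.smul_def, ResidueField.algebraMap_eq, (residue_eq_zero_iff r).mpr hr, zero_mul]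

theorem exists_linearMap_residueField_apply_eq_one {y : M}
    (hy : y ∉ maximalIdeal R • (⊤ : Submodule R M)) :
    ∃ ψ : M →ₗ[R] ResidueField R, ψ y = 1 := by
  let := Ideal.Quotient.field (maximalIdeal R)
  obtain ⟨φ, hφ⟩ := Module.Projective.exists_dual_eq_one (R ⧸ maximalIdeal R)
    (x := (Submodule.Quotient.mk y : M ⧸ maximalIdeal R • (⊤ : Submodule R M)))
    (by rwa [Ne, Submodule.Quotient.mk_eq_zero])
  exact ⟨φ.restrictScalars R ∘ₗ mkQ _, hφ⟩

theorem exists_residueField_retract_of_mem_colonBy {P : Submodule R M}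
    (hP : P ≤ maximalIdeal R • ⊤) {y : M} (hyP : y ∈ P.colonBy (maximalIdeal R))
    (hy : y ∉ maximalIdeal R • (⊤ : Submodule R M)) :
    ∃ (f : M ⧸ P →ₗ[R] ResidueField R) (g : ResidueField R →ₗ[R] M ⧸ P),
      f ∘ₗ g = LinearMap.id := by
  obtain ⟨ψ, hψ⟩ := exists_linearMap_residueField_apply_eq_one hy
  have hψP : P ≤ LinearMap.ker ψ := hP.trans <| smul_le.mpr fun r hr n _ => by
    rw [LinearMap.mem_ker, map_smul, ResidueField.smul_eq_zero_of_mem hr]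
  have hyker : maximalIdeal R ≤ LinearMap.ker (LinearMap.toSpanSingleton R _ (P.mkQ y)) :=
    fun r hr => by
      rw [LinearMap.mem_ker, LinearMap.toSpanSingleton_apply, mkQ_apply, ← Quotient.mk_smul,
        Quotient.mk_eq_zero]
      exact hyP r hr
  refine ⟨P.liftQ ψ hψP, (maximalIdeal R).liftQ _ hyker, LinearMap.ext fun c => ?_⟩
  obtain ⟨s, rfl⟩ := residue_surjective c
  change P.liftQ ψ hψP ((maximalIdeal R).liftQ _ hyker (Submodule.Quotient.mk s)) = residue R s
  rw [liftQ_apply, LinearMap.toSpanSingleton_apply, map_smul, mkQ_apply, liftQ_apply, hψ,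
    Algebra.smul_def, mul_one, ResidueField.algebraMap_eq]

theorem isBurch_span_singleton_smul_top_of_isSMulRegular {a : R} (ha : a ∈ maximalIdeal R)
    (hreg : IsSMulRegular M a) {y : M}
    (hyP : y ∈ (Ideal.span {a} • ⊤ : Submodule R M).colonBy (maximalIdeal R))
    (hy : y ∉ maximalIdeal R • (⊤ : Submodule R M)) :
    (Ideal.span {a} • ⊤ : Submodule R M).IsBurch := by
  intro hBurch
  have hay : a • y ∈ Ideal.span {a} • (maximalIdeal R • ⊤ : Submodule R M) := by
    rw [smul_comm, ← hBurch]
    exact smul_mem_smul ha hyP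
  rw [ideal_span_singleton_smul, mem_smul_pointwise_iff_exists] at hay
  obtain ⟨w, hw, hwy⟩ := hay
  exact hy (hreg hwy ▸ hw)

end

/-- Over a Noetherian local ring `(R, 𝔪, k)`, if `N` is a Burch submodule of a
finitely generated module `X`, then there is `a ∈ 𝔪` such that `k` is a direct summand of
`N/aN`. If moreover `depth_R N > 0` (i.e. `𝔪` contains an `N`-regular element), then `a` can be
chosen to be a non-zero-divisor on `N` and such that `aN` is a Burch submodule of `N`. -/
theorem burch_residue_field_summand
    {R : Type u} [CommRing R] [IsNoetherianRing R] [IsLocalRing R]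
    {X : Type u} [AddCommGroup X] [Module R X] [Module.Finite R X]
    (N : Submodule R X) (hN : N.IsBurch) :
    (∃ a ∈ IsLocalRing.maximalIdeal R,
      ∃ (f : (↥N ⧸ (Ideal.span {a} • (⊤ : Submodule R ↥N))) →ₗ[R] IsLocalRing.ResidueField R)
        (g : IsLocalRing.ResidueField R →ₗ[R] (↥N ⧸ (Ideal.span {a} • (⊤ : Submodule R ↥N)))),
        f ∘ₗ g = LinearMap.id) ∧
    ((∃ r ∈ IsLocalRing.maximalIdeal R, IsSMulRegular (↥N) r) →
      ∃ a ∈ IsLocalRing.maximalIdeal R, IsSMulRegular (↥N) a ∧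
        (∃ (f : (↥N ⧸ (Ideal.span {a} • (⊤ : Submodule R ↥N))) →ₗ[R] IsLocalRing.ResidueField R)
          (g : IsLocalRing.ResidueField R →ₗ[R]
            (↥N ⧸ (Ideal.span {a} • (⊤ : Submodule R ↥N)))),
          f ∘ₗ g = LinearMap.id) ∧
        (Ideal.span {a} • (⊤ : Submodule R ↥N)).IsBurch) := by
  have hspan_le {a : R} (ha : a ∈ maximalIdeal R) :
      (Ideal.span {a} • ⊤ : Submodule R N) ≤ maximalIdeal R • ⊤ :=
    smul_mono_left ((Ideal.span_singleton_le_iff_mem _).mpr ha)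
  have hNm := N.isBurch_iff_not_le_colon.mp hN
  obtain ⟨b, hb, hbN⟩ := SetLike.not_le_iff_exists.mp hNm
  obtain ⟨y, hyC, hy⟩ := N.exists_mem_colonBy_span_singleton_smul_top hb hbN
  refine ⟨⟨b, hb, exists_residueField_retract_of_mem_colonBy (hspan_le hb) hyC hy⟩, ?_⟩
  rintro ⟨r, hr, hreg⟩
  have : Module.Finite R N := Module.Finite.iff_fg.mpr (IsNoetherian.noetherian N)
  obtain ⟨a, ha, haN, hareg⟩ := exists_isSMulRegular_mem_notMem_of_not_le hNm hr hreg
  obtain ⟨y, hyC, hy⟩ := N.exists_mem_colonBy_span_singleton_smul_top ha haN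
  exact ⟨a, ha, hareg, exists_residueField_retract_of_mem_colonBy (hspan_le ha) hyC hy,
    isBurch_span_singleton_smul_top_of_isSMulRegular ha hareg hyC hy⟩
end
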